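/- arXiv:1206.3499 — 2 statements merged into one kernel-verified Lean document; each statement's English description precedes it below -/
import Mathlib

section
/- Let Ω ⊆ ℝⁿ be open, let u : Ω → ℝ be a smooth solution of the minimal surface equation, and let η : Ω → ℝ be smooth. Set W = √(1+|∇u|²), gⁱʲ = δⁱʲ − ∂ᵢu ∂ⱼu / W², |A|² = W⁻² Σᵢⱼₖₗ gⁱᵏ gʲˡ ∂ᵢ∂ⱼu ∂ₖ∂ₗu, and h = η W. Then L h := Δˢh − 2 Σᵢⱼ gⁱʲ (∂ᵢW / W) ∂ⱼh = W (Δˢη + η |A|²) on Ω, where Δˢf = W⁻¹ Σᵢ ∂ᵢ(W Σⱼ gⁱʲ ∂ⱼf). -/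
/-!
The operator `Δˢ` obeys the product rule `Δˢ(fh) = f Δˢh + h Δˢf + 2⟨∇f, ∇h⟩`, which turns
`L(ηW)` into `W Δˢη + η (ΔˢW − 2|∇W|²/W)`; so everything rests on
`ΔˢW = W|A|² + 2|∇W|²/W`.

On a minimal graph the flux of `∂ₖu` is `W gⁱʲ ∂ⱼ∂ₖu = W² ∂ₖ(∂ᵢu/W)`. Its divergence has no
second-order part, because `Σᵢ ∂ᵢ∂ₖ(∂ᵢu/W)` is `∂ₖ` of the minimal surface equation, and this
gives `Δˢ∂ₖu = 2⟨∇W, ∇∂ₖu⟩/W`. Expanding `Δˢ(W²) = Σₖ Δˢ((∂ₖu)²)` by the product rule and using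
`Σₖ ∂ₖu ∇∂ₖu = W ∇W`, both for the cross terms and for `W²|A|² = Σₖ |∇∂ₖu|² − |∇W|²`, yields the
formula for `ΔˢW`.
-/

open Real

/-- The `i`-th partial derivative of a function on `ℝⁿ`. -/
noncomputable def pd {n : ℕ} (u : EuclideanSpace ℝ (Fin n) → ℝ) (i : Fin n)
    (x : EuclideanSpace ℝ (Fin n)) : ℝ :=
  fderiv ℝ u x (EuclideanSpace.single i 1)

/-- `W = √(1 + |∇u|²)`. -/
noncomputable def Wf {n : ℕ} (u : EuclideanSpace ℝ (Fin n) → ℝ)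
    (x : EuclideanSpace ℝ (Fin n)) : ℝ :=
  Real.sqrt (1 + ∑ i, (pd u i x) ^ 2)

/-- The inverse metric `gⁱʲ = δⁱʲ − ∂ᵢu ∂ⱼu / W²` of the graph of `u`. -/
noncomputable def ginv {n : ℕ} (u : EuclideanSpace ℝ (Fin n) → ℝ) (i j : Fin n)
    (x : EuclideanSpace ℝ (Fin n)) : ℝ :=
  (if i = j then (1 : ℝ) else 0) - pd u i x * pd u j x / (Wf u x) ^ 2

/-- The Laplace–Beltrami operator of the graph of `u` in divergence form:
`Δˢf = W⁻¹ Σᵢ ∂ᵢ(W Σⱼ gⁱʲ ∂ⱼf)`. -/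
noncomputable def lapS {n : ℕ} (u f : EuclideanSpace ℝ (Fin n) → ℝ)
    (x : EuclideanSpace ℝ (Fin n)) : ℝ :=
  (Wf u x)⁻¹ * ∑ i, pd (fun y => Wf u y * ∑ j, ginv u i j y * pd f j y) i x

/-- The squared norm of the second fundamental form of the graph of `u`:
`|A|² = W⁻² Σᵢⱼₖₗ gⁱᵏ gʲˡ ∂ᵢ∂ⱼu ∂ₖ∂ₗu`. -/
noncomputable def normA2 {n : ℕ} (u : EuclideanSpace ℝ (Fin n) → ℝ)
    (x : EuclideanSpace ℝ (Fin n)) : ℝ :=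
  ((Wf u x) ^ 2)⁻¹ * ∑ i, ∑ j, ∑ k, ∑ l,
    ginv u i k x * ginv u j l x * pd (pd u j) i x * pd (pd u l) k x

/-- The operator `L h = Δˢh − 2 Σᵢⱼ gⁱʲ (∂ᵢW / W) ∂ⱼh`. -/
noncomputable def Lop {n : ℕ} (u h : EuclideanSpace ℝ (Fin n) → ℝ)
    (x : EuclideanSpace ℝ (Fin n)) : ℝ :=
  lapS u h x - 2 * ∑ i, ∑ j, ginv u i j x * (pd (Wf u) i x / Wf u x) * pd h j x

open scoped ContDiff

namespace MinimalGraph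

variable {n : ℕ} {Ω : Set (EuclideanSpace ℝ (Fin n))} {x : EuclideanSpace ℝ (Fin n)}
  {f g : EuclideanSpace ℝ (Fin n) → ℝ} {i j : Fin n}

theorem pd_congr (hΩ : IsOpen Ω) (h : Set.EqOn f g Ω) (hx : x ∈ Ω) : pd f i x = pd g i x := by
  rw [pd, pd, (Filter.eventuallyEq_of_mem (hΩ.mem_nhds hx) h).fderiv_eq]

theorem pd_add (hf : DifferentiableAt ℝ f x) (hg : DifferentiableAt ℝ g x) :
    pd (fun y => f y + g y) i x = pd f i x + pd g i x := by
  simp [pd, fderiv_fun_add hf hg]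

theorem pd_const_add (c : ℝ) : pd (fun y => c + f y) i x = pd f i x := by
  simp [pd, fderiv_const_add]

theorem pd_mul (hf : DifferentiableAt ℝ f x) (hg : DifferentiableAt ℝ g x) :
    pd (fun y => f y * g y) i x = pd f i x * g x + f x * pd g i x := by
  simp only [pd, fderiv_fun_mul hf hg, add_apply, smul_apply, smul_eq_mul]
  ring

theorem pd_inv (hg : DifferentiableAt ℝ g x) (h0 : g x ≠ 0) :
    pd (fun y => (g y)⁻¹) i x = -pd g i x / g x ^ 2 := by
  have h := (hasDerivAt_inv h0).comp_hasFDerivAt x hg.hasFDerivAt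
  rw [pd, show (fun y => (g y)⁻¹) = (fun t => t⁻¹) ∘ g from rfl, h.fderiv]
  simp [pd, div_eq_mul_inv, mul_comm]

theorem pd_div (hf : DifferentiableAt ℝ f x) (hg : DifferentiableAt ℝ g x) (h0 : g x ≠ 0) :
    pd (fun y => f y / g y) i x = (pd f i x * g x - f x * pd g i x) / g x ^ 2 := by
  rw [show (fun y => f y / g y) = fun y => f y * (g y)⁻¹ from funext fun _ => div_eq_mul_inv _ _,
    pd_mul hf (hg.fun_inv h0), pd_inv hg h0]
  field_simp
  ring

theorem pd_sum {ι : Type*} (s : Finset ι) {F : ι → EuclideanSpace ℝ (Fin n) → ℝ}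
    (h : ∀ a ∈ s, DifferentiableAt ℝ (F a) x) :
    pd (fun y => ∑ a ∈ s, F a y) i x = ∑ a ∈ s, pd (F a) i x := by
  simp [pd, fderiv_fun_sum h]

theorem contDiffOn_pd (hΩ : IsOpen Ω) (hf : ContDiffOn ℝ ∞ f Ω) :
    ContDiffOn ℝ ∞ (pd f i) Ω :=
  show ContDiffOn ℝ ∞ (ContinuousLinearMap.apply ℝ ℝ (EuclideanSpace.single i 1) ∘ fderiv ℝ f) Ω
  from (ContinuousLinearMap.apply ℝ ℝ _).contDiff.comp_contDiffOn
    (hf.fderiv_of_isOpen (m := ∞) hΩ le_rfl)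

theorem pd_pd_comm (hΩ : IsOpen Ω) (hf : ContDiffOn ℝ ∞ f Ω) (hx : x ∈ Ω) :
    pd (pd f j) i x = pd (pd f i) j x := by
  have hf' := hf.contDiffAt (hΩ.mem_nhds hx)
  have hdiff : DifferentiableAt ℝ (fderiv ℝ f) x :=
    (hf'.fderiv_right (m := 1) (by decide)).differentiableAt one_ne_zero
  have hsnd (k l : Fin n) : pd (pd f l) k x =
      fderiv ℝ (fderiv ℝ f) x (EuclideanSpace.single k 1) (EuclideanSpace.single l 1) := by
    change fderiv ℝ (fun y => fderiv ℝ f y (EuclideanSpace.single l 1)) x _ = _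
    simp [fderiv_clm_apply hdiff (differentiableAt_const _)]
  rw [hsnd, hsnd, (hf'.isSymmSndFDerivAt
    (by rw [minSmoothness_of_isRCLikeNormedField]; decide)).eq]

theorem differentiableAt_of_contDiffOn (hΩ : IsOpen Ω) (hf : ContDiffOn ℝ ∞ f Ω) (hx : x ∈ Ω) :
    DifferentiableAt ℝ f x :=
  (hf.contDiffAt (hΩ.mem_nhds hx)).differentiableAt (by decide)

variable {u : EuclideanSpace ℝ (Fin n) → ℝ}

theorem Wf_ne_zero : Wf u x ≠ 0 := (Real.sqrt_pos.2 (by positivity)).ne'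

theorem Wf_mul_Wf (u : EuclideanSpace ℝ (Fin n) → ℝ) :
    (fun y => Wf u y * Wf u y) = fun y => 1 + ∑ k, pd u k y * pd u k y := by
  funext y
  rw [Wf, Real.mul_self_sqrt (by positivity)]
  simp only [sq]

theorem contDiffOn_Wf (hΩ : IsOpen Ω) (hu : ContDiffOn ℝ ∞ u Ω) : ContDiffOn ℝ ∞ (Wf u) Ω :=
  (contDiffOn_const.add (ContDiffOn.sum fun k _ => (contDiffOn_pd hΩ hu).pow 2)).sqrt
    fun _ _ => by positivity

theorem Wf_mul_pd_Wf (hΩ : IsOpen Ω) (hu : ContDiffOn ℝ ∞ u Ω) (hx : x ∈ Ω) :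
    Wf u x * pd (Wf u) i x = ∑ k, pd u k x * pd (pd u k) i x := by
  have hW := differentiableAt_of_contDiffOn hΩ (contDiffOn_Wf hΩ hu) hx
  have hpd k := differentiableAt_of_contDiffOn hΩ (contDiffOn_pd (i := k) hΩ hu) hx
  have h : pd (fun y => Wf u y * Wf u y) i x = pd (fun y => 1 + ∑ k, pd u k y * pd u k y) i x := by
    rw [Wf_mul_Wf]
  rw [pd_mul hW hW, pd_const_add, pd_sum (F := fun k y => pd u k y * pd u k y) _
    fun k _ => (hpd k).fun_mul (hpd k)] at h
  simp only [pd_mul (hpd _) (hpd _), mul_comm (pd (pd u _) i x), ← two_mul,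
    ← Finset.mul_sum] at h
  linarith

theorem ginv_comm (u : EuclideanSpace ℝ (Fin n) → ℝ) (i j : Fin n) (x : EuclideanSpace ℝ (Fin n)) :
    ginv u i j x = ginv u j i x := by
  simp only [ginv, eq_comm (a := i), mul_comm (pd u i x)]

theorem contDiffOn_ginv (hΩ : IsOpen Ω) (hu : ContDiffOn ℝ ∞ u Ω) :
    ContDiffOn ℝ ∞ (ginv u i j) Ω :=
  contDiffOn_const.sub (((contDiffOn_pd hΩ hu).mul (contDiffOn_pd hΩ hu)).div
    ((contDiffOn_Wf hΩ hu).pow 2) fun _ _ => pow_ne_zero 2 Wf_ne_zero)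

noncomputable def grad (f : EuclideanSpace ℝ (Fin n) → ℝ) (x : EuclideanSpace ℝ (Fin n)) :
    Fin n → ℝ :=
  fun i => pd f i x

/-- `gForm u x (grad f x) (grad h x) = gⁱʲ ∂ᵢf ∂ⱼh` is the inner product of the gradients of
`f` and `h` along the graph. -/
noncomputable def gForm (u : EuclideanSpace ℝ (Fin n) → ℝ) (x : EuclideanSpace ℝ (Fin n)) :
    LinearMap.BilinForm ℝ (Fin n → ℝ) :=
  Matrix.toBilin' (Matrix.of fun i j => ginv u i j x)

theorem gForm_apply (a b : Fin n → ℝ) :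
    gForm u x a b = ∑ i, ∑ j, ginv u i j x * a i * b j := by
  simp only [gForm, Matrix.toBilin'_apply, Matrix.of_apply]
  exact Finset.sum_congr rfl fun i _ => Finset.sum_congr rfl fun j _ => by ring

theorem gForm_comm (a b : Fin n → ℝ) : gForm u x a b = gForm u x b a := by
  rw [gForm_apply, gForm_apply, Finset.sum_comm]
  exact Finset.sum_congr rfl fun i _ => Finset.sum_congr rfl fun j _ => by
    rw [ginv_comm]; ring

theorem grad_mul (hf : DifferentiableAt ℝ f x) (hg : DifferentiableAt ℝ g x) :
    grad (fun y => f y * g y) x = g x • grad f x + f x • grad g x := by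
  funext i
  simp [grad, pd_mul hf hg, mul_comm]

noncomputable def flux (u f : EuclideanSpace ℝ (Fin n) → ℝ) (i : Fin n)
    (y : EuclideanSpace ℝ (Fin n)) : ℝ :=
  Wf u y * ∑ j, ginv u i j y * pd f j y

theorem sum_pd_flux (u f : EuclideanSpace ℝ (Fin n) → ℝ) (x : EuclideanSpace ℝ (Fin n)) :
    ∑ i, pd (flux u f i) i x = Wf u x * lapS u f x := by
  rw [lapS, mul_inv_cancel_left₀ Wf_ne_zero]
  rfl

theorem sum_pd_mul_flux (h : EuclideanSpace ℝ (Fin n) → ℝ) :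
    ∑ i, pd h i x * flux u f i x = Wf u x * gForm u x (grad h x) (grad f x) := by
  simp only [flux, gForm_apply, grad, Finset.mul_sum]
  exact Finset.sum_congr rfl fun i _ => Finset.sum_congr rfl fun j _ => by ring

theorem contDiffOn_flux (hΩ : IsOpen Ω) (hu : ContDiffOn ℝ ∞ u Ω) (hf : ContDiffOn ℝ ∞ f Ω) :
    ContDiffOn ℝ ∞ (flux u f i) Ω :=
  (contDiffOn_Wf hΩ hu).mul
    (ContDiffOn.sum fun j _ => (contDiffOn_ginv (j := j) hΩ hu).mul (contDiffOn_pd hΩ hf))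

theorem flux_mul (hΩ : IsOpen Ω) (hf : ContDiffOn ℝ ∞ f Ω) (hg : ContDiffOn ℝ ∞ g Ω)
    (hx : x ∈ Ω) :
    flux u (fun y => f y * g y) i x = f x * flux u g i x + g x * flux u f i x := by
  simp only [flux, pd_mul (differentiableAt_of_contDiffOn hΩ hf hx)
    (differentiableAt_of_contDiffOn hΩ hg hx), Finset.mul_sum, ← Finset.sum_add_distrib]
  exact Finset.sum_congr rfl fun j _ => by ring

theorem lapS_mul (hΩ : IsOpen Ω) (hu : ContDiffOn ℝ ∞ u Ω) (hf : ContDiffOn ℝ ∞ f Ω)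
    (hg : ContDiffOn ℝ ∞ g Ω) (hx : x ∈ Ω) :
    lapS u (fun y => f y * g y) x
      = f x * lapS u g x + g x * lapS u f x + 2 * gForm u x (grad f x) (grad g x) := by
  have hdf := differentiableAt_of_contDiffOn hΩ hf hx
  have hdg := differentiableAt_of_contDiffOn hΩ hg hx
  have hflux (h : EuclideanSpace ℝ (Fin n) → ℝ) (hh : ContDiffOn ℝ ∞ h Ω) (i : Fin n) :=
    differentiableAt_of_contDiffOn hΩ (contDiffOn_flux (i := i) hΩ hu hh) hx
  have hpd (i : Fin n) : pd (flux u (fun y => f y * g y) i) i x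
      = pd f i x * flux u g i x + f x * pd (flux u g i) i x
        + (pd g i x * flux u f i x + g x * pd (flux u f i) i x) := by
    rw [pd_congr hΩ (fun y hy => flux_mul hΩ hf hg hy) hx,
      pd_add (hdf.fun_mul (hflux g hg i)) (hdg.fun_mul (hflux f hf i)),
      pd_mul hdf (hflux g hg i), pd_mul hdg (hflux f hf i)]
  have h := sum_pd_flux u (fun y => f y * g y) x
  simp only [hpd, Finset.sum_add_distrib, ← Finset.mul_sum, sum_pd_flux] at h
  rw [sum_pd_mul_flux, sum_pd_mul_flux, gForm_comm (grad g x)] at h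
  have hW : Wf u x ≠ 0 := Wf_ne_zero
  apply mul_left_cancel₀ hW
  linear_combination -h

theorem Lop_mul_Wf {η : EuclideanSpace ℝ (Fin n) → ℝ} (hΩ : IsOpen Ω) (hu : ContDiffOn ℝ ∞ u Ω)
    (hη : ContDiffOn ℝ ∞ η Ω) (hx : x ∈ Ω) :
    Lop u (fun y => η y * Wf u y) x = Wf u x * lapS u η x
      + η x * (lapS u (Wf u) x - 2 * gForm u x (grad (Wf u) x) (grad (Wf u) x) / Wf u x) := by
  have hdη := differentiableAt_of_contDiffOn hΩ hη hx
  have hdW := differentiableAt_of_contDiffOn hΩ (contDiffOn_Wf hΩ hu) hx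
  have hcross : ∑ i, ∑ j, ginv u i j x * (pd (Wf u) i x / Wf u x) * pd (fun y => η y * Wf u y) j x
      = gForm u x ((Wf u x)⁻¹ • grad (Wf u) x) (grad (fun y => η y * Wf u y) x) := by
    rw [gForm_apply]
    exact Finset.sum_congr rfl fun i _ => Finset.sum_congr rfl fun j _ => by
      simp only [grad, Pi.smul_apply, smul_eq_mul]; ring
  rw [Lop, hcross, grad_mul hdη hdW, lapS_mul hΩ hu hη (contDiffOn_Wf hΩ hu) hx]
  simp only [map_add, map_smul, LinearMap.smul_apply, smul_eq_mul]
  rw [gForm_comm (grad η x)]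
  have hW : Wf u x ≠ 0 := Wf_ne_zero
  field_simp
  ring

theorem lapS_const_add (c : ℝ) : lapS u (fun y => c + f y) x = lapS u f x := by
  simp only [lapS, pd_const_add]

theorem lapS_sum {ι : Type*} (s : Finset ι) {F : ι → EuclideanSpace ℝ (Fin n) → ℝ}
    (hΩ : IsOpen Ω) (hu : ContDiffOn ℝ ∞ u Ω) (hF : ∀ k ∈ s, ContDiffOn ℝ ∞ (F k) Ω)
    (hx : x ∈ Ω) :
    lapS u (fun y => ∑ k ∈ s, F k y) x = ∑ k ∈ s, lapS u (F k) x := by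
  have hflux (i : Fin n) : Set.EqOn (flux u (fun y => ∑ k ∈ s, F k y) i)
      (fun y => ∑ k ∈ s, flux u (F k) i y) Ω := fun y hy => by
    simp only [flux, pd_sum s fun k hk => differentiableAt_of_contDiffOn hΩ (hF k hk) hy,
      Finset.mul_sum]
    rw [Finset.sum_comm]
  have h := sum_pd_flux u (fun y => ∑ k ∈ s, F k y) x
  simp only [pd_congr hΩ (hflux _) hx, pd_sum s fun k hk =>
    differentiableAt_of_contDiffOn hΩ (contDiffOn_flux hΩ hu (hF k hk)) hx] at h
  rw [Finset.sum_comm] at h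
  simp only [sum_pd_flux, ← Finset.mul_sum] at h
  exact (mul_left_cancel₀ Wf_ne_zero h).symm

theorem sum_ginv_mul (u : EuclideanSpace ℝ (Fin n) → ℝ) (x : EuclideanSpace ℝ (Fin n))
    (w : Fin n → ℝ) (i : Fin n) :
    ∑ j, ginv u i j x * w j = w i - pd u i x * (∑ j, pd u j x * w j) / Wf u x ^ 2 := by
  simp only [ginv, sub_mul, Finset.sum_sub_distrib, ite_mul, one_mul, zero_mul,
    Finset.sum_ite_eq, Finset.mem_univ, if_true, Finset.mul_sum, Finset.sum_div]
  exact congrArg _ (Finset.sum_congr rfl fun j _ => by ring)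

theorem contDiffOn_pd_div_Wf (hΩ : IsOpen Ω) (hu : ContDiffOn ℝ ∞ u Ω) :
    ContDiffOn ℝ ∞ (fun y => pd u i y / Wf u y) Ω :=
  (contDiffOn_pd hΩ hu).div (contDiffOn_Wf hΩ hu) fun _ _ => Wf_ne_zero

theorem flux_pd (hΩ : IsOpen Ω) (hu : ContDiffOn ℝ ∞ u Ω) (hx : x ∈ Ω) (i k : Fin n) :
    flux u (pd u k) i x = Wf u x * Wf u x * pd (fun y => pd u i y / Wf u y) k x := by
  have hW : Wf u x ≠ 0 := Wf_ne_zero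
  rw [flux, sum_ginv_mul, pd_div (differentiableAt_of_contDiffOn hΩ (contDiffOn_pd hΩ hu) hx)
    (differentiableAt_of_contDiffOn hΩ (contDiffOn_Wf hΩ hu) hx) hW,
    Finset.sum_congr rfl fun j _ => by rw [pd_pd_comm hΩ hu hx], ← Wf_mul_pd_Wf hΩ hu hx,
    pd_pd_comm hΩ hu hx]
  field_simp

theorem lapS_pd (hΩ : IsOpen Ω) (hu : ContDiffOn ℝ ∞ u Ω)
    (hmse : ∀ y ∈ Ω, ∑ i, pd (fun z => pd u i z / Wf u z) i y = 0) (hx : x ∈ Ω) (k : Fin n) :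
    lapS u (pd u k) x = 2 * gForm u x (grad (Wf u) x) (grad (pd u k) x) / Wf u x := by
  have hW : Wf u x ≠ 0 := Wf_ne_zero
  have hdW := differentiableAt_of_contDiffOn hΩ (contDiffOn_Wf hΩ hu) hx
  have hν (i : Fin n) := contDiffOn_pd_div_Wf (i := i) hΩ hu
  have hdiv : ∑ i, pd (pd (fun y => pd u i y / Wf u y) k) i x = 0 := by
    rw [Finset.sum_congr rfl fun i _ => pd_pd_comm hΩ (hν i) hx,
      ← pd_sum _ fun i _ => differentiableAt_of_contDiffOn hΩ (contDiffOn_pd hΩ (hν i)) hx,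
      pd_congr (g := fun _ => 0) hΩ hmse hx]
    simp [pd]
  have hpd (i : Fin n) : pd (flux u (pd u k) i) i x
      = 2 / Wf u x * (pd (Wf u) i x * flux u (pd u k) i x)
        + Wf u x * Wf u x * pd (pd (fun y => pd u i y / Wf u y) k) i x := by
    rw [pd_congr hΩ (fun y hy => flux_pd hΩ hu hy i k) hx,
      pd_mul (hdW.fun_mul hdW) (differentiableAt_of_contDiffOn hΩ (contDiffOn_pd hΩ (hν i)) hx),
      pd_mul hdW hdW, flux_pd hΩ hu hx]
    field_simp
    ring
  have h := sum_pd_flux u (pd u k) x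
  simp only [hpd, Finset.sum_add_distrib, ← Finset.mul_sum, hdiv, sum_pd_mul_flux] at h
  rw [mul_zero, add_zero] at h
  rw [← mul_right_inj' hW, ← h]
  field_simp

theorem sum_pd_smul_grad_pd (hΩ : IsOpen Ω) (hu : ContDiffOn ℝ ∞ u Ω) (hx : x ∈ Ω) :
    ∑ k, pd u k x • grad (pd u k) x = Wf u x • grad (Wf u) x := by
  funext i
  simp only [Finset.sum_apply, Pi.smul_apply, smul_eq_mul, grad, Wf_mul_pd_Wf hΩ hu hx]

theorem sum_pd_mul_gForm_grad_pd (hΩ : IsOpen Ω) (hu : ContDiffOn ℝ ∞ u Ω) (hx : x ∈ Ω)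
    (a : Fin n → ℝ) :
    ∑ k, pd u k x * gForm u x a (grad (pd u k) x) = Wf u x * gForm u x a (grad (Wf u) x) := by
  rw [← smul_eq_mul, ← map_smul, ← sum_pd_smul_grad_pd hΩ hu hx]
  simp only [map_sum, map_smul, smul_eq_mul]

theorem Wf_sq_mul_normA2 (hΩ : IsOpen Ω) (hu : ContDiffOn ℝ ∞ u Ω) (hx : x ∈ Ω) :
    Wf u x ^ 2 * normA2 u x = ∑ k, gForm u x (grad (pd u k) x) (grad (pd u k) x)
      - gForm u x (grad (Wf u) x) (grad (Wf u) x) := by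
  have hW : Wf u x ≠ 0 := Wf_ne_zero
  have hcontract : ∑ i, ∑ j, ∑ k, ∑ l,
        ginv u i k x * ginv u j l x * pd (pd u j) i x * pd (pd u l) k x
      = ∑ j, ∑ l, ginv u j l x * gForm u x (grad (pd u j) x) (grad (pd u l) x) := by
    rw [Finset.sum_comm]
    refine Finset.sum_congr rfl fun j _ => ?_
    rw [Finset.sum_congr rfl fun i _ => Finset.sum_comm, Finset.sum_comm]
    refine Finset.sum_congr rfl fun l _ => ?_
    rw [gForm_apply, Finset.mul_sum]
    exact Finset.sum_congr rfl fun i _ => by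
      rw [Finset.mul_sum]; exact Finset.sum_congr rfl fun k _ => by simp only [grad]; ring
  have hdouble : ∑ j, pd u j x * (Wf u x * gForm u x (grad (pd u j) x) (grad (Wf u) x))
      = Wf u x ^ 2 * gForm u x (grad (Wf u) x) (grad (Wf u) x) := by
    simp only [mul_left_comm _ (Wf u x), ← Finset.mul_sum, gForm_comm _ (grad (Wf u) x),
      sum_pd_mul_gForm_grad_pd hΩ hu hx]
    ring
  rw [normA2, ← mul_assoc, mul_inv_cancel₀ (pow_ne_zero 2 hW), one_mul, hcontract]
  simp only [sum_ginv_mul, Finset.sum_sub_distrib, sum_pd_mul_gForm_grad_pd hΩ hu hx]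
  rw [← Finset.sum_div, hdouble]
  field_simp

theorem lapS_Wf (hΩ : IsOpen Ω) (hu : ContDiffOn ℝ ∞ u Ω)
    (hmse : ∀ y ∈ Ω, ∑ i, pd (fun z => pd u i z / Wf u z) i y = 0) (hx : x ∈ Ω) :
    lapS u (Wf u) x
      = Wf u x * normA2 u x + 2 * gForm u x (grad (Wf u) x) (grad (Wf u) x) / Wf u x := by
  have hW : Wf u x ≠ 0 := Wf_ne_zero
  have hcW := contDiffOn_Wf hΩ hu
  have hcpd (k : Fin n) := contDiffOn_pd (i := k) hΩ hu
  have hlap : lapS u (fun y => Wf u y * Wf u y) x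
      = ∑ k, lapS u (fun y => pd u k y * pd u k y) x := by
    rw [Wf_mul_Wf, lapS_const_add, lapS_sum _ hΩ hu (fun k _ => (hcpd k).mul (hcpd k)) hx]
  have hcross : ∑ k, pd u k x * (2 * gForm u x (grad (Wf u) x) (grad (pd u k) x) / Wf u x)
      = 2 * gForm u x (grad (Wf u) x) (grad (Wf u) x) := by
    simp only [mul_div_assoc', mul_left_comm (pd u _ x) 2, ← Finset.sum_div, ← Finset.mul_sum,
      sum_pd_mul_gForm_grad_pd hΩ hu hx]
    field_simp
  simp only [lapS_mul hΩ hu hcW hcW hx, lapS_mul hΩ hu (hcpd _) (hcpd _) hx,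
    lapS_pd hΩ hu hmse hx, Finset.sum_add_distrib, hcross, ← Finset.mul_sum] at hlap
  have hA := Wf_sq_mul_normA2 hΩ hu hx
  field_simp
  linear_combination hlap / 2 - hA

end MinimalGraph

/-- For a smooth solution `u` of the minimal surface equation and smooth `η`,
with `h = η W`, one has `L h = W (Δˢη + η |A|²)`. -/
theorem L_of_eta_W (n : ℕ)
    (Ω : Set (EuclideanSpace ℝ (Fin n))) (hΩ : IsOpen Ω)
    (u : EuclideanSpace ℝ (Fin n) → ℝ) (hu : ContDiffOn ℝ (⊤ : ℕ∞) u Ω)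
    (hmse : ∀ x ∈ Ω, ∑ i, pd (fun y => pd u i y / Wf u y) i x = 0)
    (η : EuclideanSpace ℝ (Fin n) → ℝ) (hη : ContDiffOn ℝ (⊤ : ℕ∞) η Ω) :
    ∀ x ∈ Ω, Lop u (fun y => η y * Wf u y) x
      = Wf u x * (lapS u η x + η x * normA2 u x) := by
  intro x hx
  rw [MinimalGraph.Lop_mul_Wf hΩ hu hη hx, MinimalGraph.lapS_Wf hΩ hu hmse hx]
  have hW : Wf u x ≠ 0 := MinimalGraph.Wf_ne_zero
  field_simp
  ring
end

section
/- Fix an integer n ≥ 2 and r₀ > 0, and let φ(r) = ∫_{r₀}^{r} dt / √((t/r₀)^{2n} − 1). Define w(x) = φ(|x|) − φ(2r₀) on the annulus A = {x ∈ ℝⁿ : 2r₀ < |x| < 4r₀}. Then w is a strict supersolution of the minimal surface equation on A: Σᵢ ∂ᵢ(∂ᵢw / √(1+|∇w|²)) < 0 on A; moreover w = 0 on {|x| = 2r₀}, w = φ(4r₀) − φ(2r₀) > 0 on {|x| = 4r₀}, and 0 < w < φ(4r₀) − φ(2r₀) in A. -/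
open Real

/-- The catenoid height function `φ(r) = ∫_{r₀}^{r} dt / √((t/r₀)^{2n} − 1)`. -/
noncomputable def phi (n : ℕ) (r₀ r : ℝ) : ℝ :=
  ∫ t in r₀..r, 1 / Real.sqrt ((t / r₀) ^ (2 * n) - 1)

/-! For a radial function `u(x) = g(|x|)` on `ℝⁿ` the flux is `∇u / W = g'/√(1 + g'²) · x/|x|`.
For the catenoid profile `g' = 1/√((r/r₀)^{2n} - 1)` this is `r₀ⁿ x |x|^{-(n+1)}`, and the
divergence of `x |x|^m` in `ℝⁿ` is `(n + m) |x|^m`, so the flux has divergence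
`-r₀ⁿ |x|^{-(n+1)} < 0`. By Bernoulli's inequality the integrand defining `φ` is
`O((t - r₀)^{-1/2})` near `r₀`, so `φ` is a genuine antiderivative of it on `(r₀, ∞)` and hence
strictly increasing there; this gives the boundary values and bounds. -/

open Set MeasureTheory

theorem hasFDerivAt_norm_of_ne_zero {E : Type*} [NormedAddCommGroup E] [InnerProductSpace ℝ E]
    {x : E} (hx : x ≠ 0) : HasFDerivAt (fun y : E => ‖y‖) (‖x‖⁻¹ • innerSL ℝ x) x := by
  have hsqrt := (hasStrictFDerivAt_norm_sq x).hasFDerivAt.sqrt (by positivity)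
  simp only [sqrt_sq (norm_nonneg _)] at hsqrt
  convert hsqrt using 1
  ext v
  simp only [smul_apply, coe_innerSL_apply, smul_eq_mul, nsmul_eq_mul, Nat.cast_ofNat]
  field_simp

section Radial

variable {n : ℕ} {x : EuclideanSpace ℝ (Fin n)}

theorem pd_of_hasFDerivAt {u : EuclideanSpace ℝ (Fin n) → ℝ}
    {u' : EuclideanSpace ℝ (Fin n) →L[ℝ] ℝ} (hu : HasFDerivAt u u' x) (i : Fin n) :
    pd u i x = u' (EuclideanSpace.single i 1) := by
  rw [pd, hu.fderiv]

theorem hasFDerivAt_comp_norm {g : ℝ → ℝ} {g' : ℝ} (hg : HasDerivAt g g' ‖x‖) (hx : x ≠ 0) :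
    HasFDerivAt (fun y => g ‖y‖) (g' • ‖x‖⁻¹ • innerSL ℝ x) x :=
  hg.comp_hasFDerivAt x (hasFDerivAt_norm_of_ne_zero hx)

theorem pd_comp_norm {g : ℝ → ℝ} {g' : ℝ} (hg : HasDerivAt g g' ‖x‖) (hx : x ≠ 0) (i : Fin n) :
    pd (fun y => g ‖y‖) i x = g' * x i / ‖x‖ := by
  rw [pd_of_hasFDerivAt (hasFDerivAt_comp_norm hg hx)]
  simp only [smul_apply, coe_innerSL_apply, EuclideanSpace.inner_single_right, ringHom_apply,
    one_mul, smul_eq_mul]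
  ring

theorem Wf_comp_norm {g : ℝ → ℝ} {g' : ℝ} (hg : HasDerivAt g g' ‖x‖) (hx : x ≠ 0) :
    Wf (fun y => g ‖y‖) x = √(1 + g' ^ 2) := by
  have hx' : ‖x‖ ≠ 0 := norm_ne_zero_iff.2 hx
  have hsum : ∑ i, (g' * x i / ‖x‖) ^ 2 = g' ^ 2 * (∑ i, x i ^ 2) / ‖x‖ ^ 2 := by
    simp only [div_pow, mul_pow, Finset.sum_div, Finset.mul_sum]
  simp only [Wf, pd_comp_norm hg hx, hsum, ← EuclideanSpace.real_norm_sq_eq]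
  field_simp

theorem pd_coord_mul_comp_norm {h : ℝ → ℝ} {h' : ℝ} (hh : HasDerivAt h h' ‖x‖) (hx : x ≠ 0)
    (i : Fin n) : pd (fun y => y i * h ‖y‖) i x = h ‖x‖ + h' * x i ^ 2 / ‖x‖ := by
  have hcoord : HasFDerivAt (fun y : EuclideanSpace ℝ (Fin n) => y i)
      (EuclideanSpace.proj (𝕜 := ℝ) i) x :=
    (EuclideanSpace.proj (𝕜 := ℝ) i).hasFDerivAt
  have hprod : HasFDerivAt (fun y => y i * h ‖y‖) _ x := hcoord.mul (hasFDerivAt_comp_norm hh hx)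
  rw [pd_of_hasFDerivAt hprod]
  simp only [add_apply, smul_apply, coe_innerSL_apply,
    EuclideanSpace.inner_single_right, ringHom_apply, one_mul, smul_eq_mul, PiLp.proj_apply,
    PiLp.single_eq_same, mul_one]
  ring

/-- Divergence of the radial vector field `h(|x|) x` on `ℝⁿ`. -/
theorem sum_pd_coord_mul_comp_norm {h : ℝ → ℝ} {h' : ℝ} (hh : HasDerivAt h h' ‖x‖)
    (hx : x ≠ 0) : ∑ i, pd (fun y => y i * h ‖y‖) i x = n * h ‖x‖ + ‖x‖ * h' := by
  have hx' : ‖x‖ ≠ 0 := norm_ne_zero_iff.2 hx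
  simp only [pd_coord_mul_comp_norm hh hx, Finset.sum_add_distrib, Finset.sum_const,
    Finset.card_univ, Fintype.card_fin, nsmul_eq_mul, ← Finset.sum_div, ← Finset.mul_sum,
    ← EuclideanSpace.real_norm_sq_eq]
  field_simp

theorem sum_pd_coord_mul_norm_zpow (c : ℝ) (m : ℤ) (hx : x ≠ 0) :
    ∑ i, pd (fun y => y i * (c * ‖y‖ ^ m)) i x = (n + m) * c * ‖x‖ ^ m := by
  have hx' : ‖x‖ ≠ 0 := norm_ne_zero_iff.2 hx
  rw [sum_pd_coord_mul_comp_norm ((hasDerivAt_zpow m ‖x‖ (.inl hx')).const_mul c) hx,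
    zpow_sub_one₀ hx']
  field_simp

end Radial

section Catenoid

variable {n : ℕ} {r₀ t : ℝ}

/-- The integrand of `phi`, i.e. `φ'`. -/
noncomputable def catenoidSlope (n : ℕ) (r₀ t : ℝ) : ℝ :=
  1 / √((t / r₀) ^ (2 * n) - 1)

theorem one_lt_div_pow_two_mul (hn : n ≠ 0) (hr₀ : 0 < r₀) (ht : r₀ < t) :
    1 < (t / r₀) ^ (2 * n) :=
  one_lt_pow₀ ((one_lt_div hr₀).2 ht) (by omega)

theorem catenoidSlope_pos (hn : n ≠ 0) (hr₀ : 0 < r₀) (ht : r₀ < t) : 0 < catenoidSlope n r₀ t :=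
  one_div_pos.2 (sqrt_pos.2 (sub_pos.2 (one_lt_div_pow_two_mul hn hr₀ ht)))

theorem continuousOn_catenoidSlope (hn : n ≠ 0) (hr₀ : 0 < r₀) :
    ContinuousOn (catenoidSlope n r₀) (Ioi r₀) := by
  refine continuousOn_const.div (by fun_prop) fun t ht => ?_
  exact (sqrt_pos.2 (sub_pos.2 (one_lt_div_pow_two_mul hn hr₀ ht))).ne'

theorem catenoidSlope_le (hn : n ≠ 0) (hr₀ : 0 < r₀) (ht : r₀ < t) :
    catenoidSlope n r₀ t ≤ (2 * n / r₀) ^ (-(1 / 2) : ℝ) * (t - r₀) ^ (-(1 / 2) : ℝ) := by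
  have hbernoulli : 2 * n / r₀ * (t - r₀) ≤ (t / r₀) ^ (2 * n) - 1 := by
    have h := one_add_mul_le_pow (a := t / r₀ - 1) (by linarith [(one_lt_div hr₀).2 ht]) (2 * n)
    rw [add_sub_cancel] at h
    have : 2 * n / r₀ * (t - r₀) = ((2 * n : ℕ) : ℝ) * (t / r₀ - 1) := by
      push_cast
      field_simp
    linarith
  have hpos : 0 < 2 * n / r₀ * (t - r₀) := by
    have : (0 : ℝ) < n := by positivity
    exact mul_pos (by positivity) (sub_pos.2 ht)
  rw [← mul_rpow (by positivity) (sub_pos.2 ht).le, rpow_neg hpos.le, ← sqrt_eq_rpow,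
    catenoidSlope, one_div]
  exact inv_anti₀ (sqrt_pos.2 hpos) (sqrt_le_sqrt hbernoulli)

theorem intervalIntegrable_catenoidSlope (hn : n ≠ 0) (hr₀ : 0 < r₀) {b : ℝ} (hb : r₀ ≤ b) :
    IntervalIntegrable (catenoidSlope n r₀) volume r₀ b := by
  have hbound : IntervalIntegrable
      (fun t => (2 * n / r₀) ^ (-(1 / 2) : ℝ) * (t - r₀) ^ (-(1 / 2) : ℝ)) volume r₀ b := by
    have h := (intervalIntegral.intervalIntegrable_rpow' (a := 0) (b := b - r₀)
      (r := -(1 / 2)) (by norm_num)).comp_sub_right r₀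
    simpa using h.const_mul ((2 * n / r₀) ^ (-(1 / 2) : ℝ))
  rw [intervalIntegrable_iff_integrableOn_Ioc_of_le hb] at hbound ⊢
  refine hbound.mono' (((continuousOn_catenoidSlope hn hr₀).mono Ioc_subset_Ioi_self)
    |>.aestronglyMeasurable measurableSet_Ioc) ?_
  refine (ae_restrict_mem measurableSet_Ioc).mono fun t ht => ?_
  rw [Real.norm_of_nonneg (catenoidSlope_pos hn hr₀ ht.1).le]
  exact catenoidSlope_le hn hr₀ ht.1

theorem hasDerivAt_phi (hn : n ≠ 0) (hr₀ : 0 < r₀) {r : ℝ} (hr : r₀ < r) :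
    HasDerivAt (phi n r₀) (catenoidSlope n r₀ r) r :=
  intervalIntegral.integral_hasDerivAt_right (intervalIntegrable_catenoidSlope hn hr₀ hr.le)
    ((continuousOn_catenoidSlope hn hr₀).stronglyMeasurableAtFilter isOpen_Ioi r hr)
    ((continuousOn_catenoidSlope hn hr₀).continuousAt (Ioi_mem_nhds hr))

theorem strictMonoOn_phi (hn : n ≠ 0) (hr₀ : 0 < r₀) : StrictMonoOn (phi n r₀) (Ioi r₀) := by
  refine strictMonoOn_of_deriv_pos (convex_Ioi r₀)
    (fun r hr => (hasDerivAt_phi hn hr₀ hr).continuousAt.continuousWithinAt) fun r hr => ?_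
  rw [interior_Ioi] at hr
  rw [(hasDerivAt_phi hn hr₀ hr).deriv]
  exact catenoidSlope_pos hn hr₀ hr

theorem one_div_sqrt_sq_sub_one_div_sqrt_one_add_sq {s : ℝ} (hs : 1 < s) :
    1 / √(s ^ 2 - 1) / √(1 + (1 / √(s ^ 2 - 1)) ^ 2) = s⁻¹ := by
  have hs2 : 0 < s ^ 2 - 1 := by nlinarith
  have h : 1 + (1 / √(s ^ 2 - 1)) ^ 2 = s ^ 2 / (s ^ 2 - 1) := by
    rw [div_pow, sq_sqrt hs2.le]
    field_simp
    ring
  rw [h, sqrt_div (by positivity), sqrt_sq (by linarith)]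
  field_simp

theorem catenoidSlope_div_sqrt (hn : n ≠ 0) (hr₀ : 0 < r₀) (ht : r₀ < t) :
    catenoidSlope n r₀ t / √(1 + catenoidSlope n r₀ t ^ 2) = (r₀ / t) ^ n := by
  have hs : 1 < (t / r₀) ^ n := one_lt_pow₀ ((one_lt_div hr₀).2 ht) hn
  rw [catenoidSlope, mul_comm 2 n, pow_mul, one_div_sqrt_sq_sub_one_div_sqrt_one_add_sq hs, ← inv_pow,
    inv_div]

end Catenoid

/-- The minimal surface operator `div (∇u / W)`. -/
noncomputable def minimalSurfaceOp {n : ℕ} (u : EuclideanSpace ℝ (Fin n) → ℝ)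
    (x : EuclideanSpace ℝ (Fin n)) : ℝ :=
  ∑ i, pd (fun y => pd u i y / Wf u y) i x

section CatenoidBarrier

variable {n : ℕ} {r₀ : ℝ}

theorem pd_div_Wf_catenoid (hn : n ≠ 0) (hr₀ : 0 < r₀) (c : ℝ) {y : EuclideanSpace ℝ (Fin n)}
    (hy : r₀ < ‖y‖) (i : Fin n) :
    pd (fun z => phi n r₀ ‖z‖ - c) i y / Wf (fun z => phi n r₀ ‖z‖ - c) y
      = y i * (r₀ ^ n * ‖y‖ ^ (-(n + 1 : ℤ))) := by
  have hy0 : y ≠ 0 := norm_pos_iff.1 (hr₀.trans hy)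
  have hg := (hasDerivAt_phi hn hr₀ hy).sub_const c
  rw [pd_comp_norm hg hy0, Wf_comp_norm hg hy0]
  calc catenoidSlope n r₀ ‖y‖ * y i / ‖y‖ / √(1 + catenoidSlope n r₀ ‖y‖ ^ 2)
      _ = y i * (catenoidSlope n r₀ ‖y‖ / √(1 + catenoidSlope n r₀ ‖y‖ ^ 2)) / ‖y‖ := by ring
      _ = y i * (r₀ ^ n * ‖y‖ ^ (-(n + 1 : ℤ))) := by
        rw [catenoidSlope_div_sqrt hn hr₀ hy, ← Nat.cast_succ, zpow_neg, zpow_natCast, div_pow,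
          pow_succ]
        field_simp

theorem minimalSurfaceOp_catenoid_neg (hn : n ≠ 0) (hr₀ : 0 < r₀) (c : ℝ)
    {x : EuclideanSpace ℝ (Fin n)} (hx : r₀ < ‖x‖) :
    minimalSurfaceOp (fun z => phi n r₀ ‖z‖ - c) x < 0 := by
  have hflux : ∀ i : Fin n, (fun y => pd (fun z => phi n r₀ ‖z‖ - c) i y
      / Wf (fun z => phi n r₀ ‖z‖ - c) y) =ᶠ[nhds x] fun y => y i * (r₀ ^ n * ‖y‖ ^ (-(n + 1 : ℤ))) :=
    fun i => Filter.eventually_of_mem ((isOpen_lt continuous_const continuous_norm).mem_nhds hx)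
      fun y hy => pd_div_Wf_catenoid hn hr₀ c hy i
  have hpd : ∀ i : Fin n, pd (fun y => pd (fun z => phi n r₀ ‖z‖ - c) i y
      / Wf (fun z => phi n r₀ ‖z‖ - c) y) i x
      = pd (fun y => y i * (r₀ ^ n * ‖y‖ ^ (-(n + 1 : ℤ)))) i x := fun i => by
    rw [pd, pd, (hflux i).fderiv_eq]
  have hcoef : (n : ℝ) + ((-(n + 1 : ℤ) : ℤ) : ℝ) = -1 := by push_cast; ring
  have hpos : 0 < r₀ ^ n * ‖x‖ ^ (-(n + 1 : ℤ)) :=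
    mul_pos (pow_pos hr₀ n) (zpow_pos (hr₀.trans hx) _)
  rw [minimalSurfaceOp, Finset.sum_congr rfl fun i _ => hpd i,
    sum_pd_coord_mul_norm_zpow _ _ (norm_pos_iff.1 (hr₀.trans hx)), hcoef]
  linarith

end CatenoidBarrier

/-- The catenoid-type barrier `w(x) = φ(|x|) − φ(2r₀)` is a strict supersolution
of the minimal surface equation on the annulus `2r₀ < |x| < 4r₀`, vanishes on
the inner boundary, equals `φ(4r₀) − φ(2r₀) > 0` on the outer boundary, and
is strictly between these values inside. -/
theorem catenoid_barrier (n : ℕ) (hn : 2 ≤ n) (r₀ : ℝ) (hr₀ : 0 < r₀) :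
    (∀ x : EuclideanSpace ℝ (Fin n), 2 * r₀ < ‖x‖ → ‖x‖ < 4 * r₀ →
      (∑ i, pd (fun y =>
          pd (fun z => phi n r₀ ‖z‖ - phi n r₀ (2 * r₀)) i y
            / Wf (fun z => phi n r₀ ‖z‖ - phi n r₀ (2 * r₀)) y) i x) < 0 ∧
      0 < phi n r₀ ‖x‖ - phi n r₀ (2 * r₀) ∧
      phi n r₀ ‖x‖ - phi n r₀ (2 * r₀) < phi n r₀ (4 * r₀) - phi n r₀ (2 * r₀)) ∧
    (∀ x : EuclideanSpace ℝ (Fin n), ‖x‖ = 2 * r₀ →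
      phi n r₀ ‖x‖ - phi n r₀ (2 * r₀) = 0) ∧
    (∀ x : EuclideanSpace ℝ (Fin n), ‖x‖ = 4 * r₀ →
      phi n r₀ ‖x‖ - phi n r₀ (2 * r₀) = phi n r₀ (4 * r₀) - phi n r₀ (2 * r₀)) ∧
    0 < phi n r₀ (4 * r₀) - phi n r₀ (2 * r₀) := by
  have hn0 : n ≠ 0 := by omega
  have hmono := strictMonoOn_phi hn0 hr₀
  have hmem : ∀ {r}, 2 * r₀ ≤ r → r ∈ Ioi r₀ := fun hr => by
    simp only [mem_Ioi]
    linarith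
  refine ⟨fun x hx2 hx4 => ⟨minimalSurfaceOp_catenoid_neg hn0 hr₀ _ (by linarith), ?_, ?_⟩,
    fun x hx => by rw [hx, sub_self], fun x hx => by rw [hx], ?_⟩
  · exact sub_pos.2 (hmono (hmem le_rfl) (hmem hx2.le) hx2)
  · exact sub_lt_sub_right (hmono (hmem hx2.le) (hmem (by linarith)) hx4) _
  · exact sub_pos.2 (hmono (hmem le_rfl) (hmem (by linarith)) (by linarith))
end
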